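/- arXiv:1411.3205 — 2 statements merged into one kernel-verified Lean document; each statement's English description precedes it below -/
import Mathlib

section
/- Let a, b ∈ ℝ and c > 0. The equation ((z-a)⁺)² + ((z-b)⁺)² = c², where (x)⁺ = max{x,0}, has a unique real solution z, given by z = min{a,b} + c if |a-b| ≥ c, and z = (a + b + √(2c² - (a-b)²))/2 if |a-b| < c. -/
lemma eik_helper (a b c : ℝ) (hc : 0 < c) (hab : a ≤ b) (z : ℝ) :
    (max (z - a) 0) ^ 2 + (max (z - b) 0) ^ 2 = c ^ 2 ↔
      z = if c ≤ |a - b| then min a b + c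
          else (a + b + Real.sqrt (2 * c ^ 2 - (a - b) ^ 2)) / 2 := by
  rw [abs_sub_comm, abs_of_nonneg (sub_nonneg.mpr hab), min_eq_left hab]
  split_ifs with h
  · constructor
    · intro hz
      have hle : max (z - a) 0 ≤ c := by
        nlinarith [sq_nonneg (max (z - b) 0), le_max_right (z - a) 0]
      have hzb : z ≤ b := by
        have := le_max_left (z - a) 0
        linarith
      rw [max_eq_right (by linarith : z - b ≤ 0)] at hz
      have hma : max (z - a) 0 = c := by
        nlinarith [le_max_right (z - a) 0]
      rcases max_cases (z - a) 0 with ⟨h1, h2⟩ | ⟨h1, h2⟩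
      · linarith [h1 ▸ hma]
      · rw [h1] at hma; linarith
    · intro hz
      subst hz
      rw [max_eq_left (by linarith : (0:ℝ) ≤ a + c - a),
          max_eq_right (by linarith : a + c - b ≤ 0)]
      ring
  · push_neg at h
    set s := Real.sqrt (2 * c ^ 2 - (a - b) ^ 2) with hs
    have hnn : 0 ≤ 2 * c ^ 2 - (a - b) ^ 2 := by nlinarith
    have hs2 : s ^ 2 = 2 * c ^ 2 - (a - b) ^ 2 := Real.sq_sqrt hnn
    have hsnn : 0 ≤ s := Real.sqrt_nonneg _
    have hsgt : b - a < s := by nlinarith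
    constructor
    · intro hz
      have hzb : b < z := by
        by_contra hle
        push_neg at hle
        rw [max_eq_right (by linarith : z - b ≤ 0)] at hz
        have hma : max (z - a) 0 = c := by
          nlinarith [le_max_right (z - a) 0]
        rcases max_cases (z - a) 0 with ⟨h1, h2⟩ | ⟨h1, h2⟩
        · have : z - a = c := by rw [← h1, hma]
          linarith
        · rw [h1] at hma; linarith
      rw [max_eq_left (by linarith : (0:ℝ) ≤ z - a),
          max_eq_left (by linarith : (0:ℝ) ≤ z - b)] at hz
      have key : (2 * z - a - b) ^ 2 = s ^ 2 := by rw [hs2]; nlinarith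
      have hpos : 0 < 2 * z - a - b := by linarith
      have : 2 * z - a - b = s := by nlinarith
      linarith
    · intro hz
      subst hz
      rw [max_eq_left (by linarith : (0:ℝ) ≤ (a + b + s) / 2 - a),
          max_eq_left (by linarith : (0:ℝ) ≤ (a + b + s) / 2 - b)]
      nlinarith

theorem eikonal_2d_update_formula (a b c : ℝ) (hc : 0 < c) :
    ∀ z : ℝ, (max (z - a) 0) ^ 2 + (max (z - b) 0) ^ 2 = c ^ 2 ↔
      z = if c ≤ |a - b| then min a b + c
          else (a + b + Real.sqrt (2 * c ^ 2 - (a - b) ^ 2)) / 2 := by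
  intro z
  rcases le_total a b with hab | hab
  · exact eik_helper a b c hc hab z
  · have := eik_helper b a c hc hab z
    rw [abs_sub_comm, min_comm] at this
    have e1 : b + a = a + b := by ring
    have e2 : (b - a) ^ 2 = (a - b) ^ 2 := by ring
    rw [e1, e2, add_comm ((max (z - b) 0) ^ 2)] at this
    exact this
end

section
/- Let f be continuous and positive on [a,b], let u(x) = min{u_a(x), u_b(x)} with u_a(x) = g(a) + ∫_a^x f, u_b(x) = g(b) + ∫_x^b f, and suppose u_a(b) > g(b) and u_b(a) > g(a). Then there exists a unique x* ∈ (a,b) with u_a(x*) = u_b(x*); moreover u = u_a on [a, x*], u = u_b on [x*, b], and u attains its maximum over [a,b] at x*. -/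
theorem eikonal_1d_branch_structure (a b : ℝ) (hab : a < b) (f g : ℝ → ℝ)
    (hf : ContinuousOn f (Set.Icc a b)) (hfpos : ∀ x ∈ Set.Icc a b, 0 < f x)
    (ua ub u : ℝ → ℝ)
    (hua : ∀ x, ua x = g a + ∫ s in a..x, f s)
    (hub : ∀ x, ub x = g b + ∫ s in x..b, f s)
    (hu : ∀ x, u x = min (ua x) (ub x))
    (hcross1 : g b < ua b) (hcross2 : g a < ub a) :
    ∃ xstar ∈ Set.Ioo a b,
      ua xstar = ub xstar ∧
      (∀ y ∈ Set.Ioo a b, ua y = ub y → y = xstar) ∧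
      (∀ x ∈ Set.Icc a xstar, u x = ua x) ∧
      (∀ x ∈ Set.Icc xstar b, u x = ub x) ∧
      (∀ x ∈ Set.Icc a b, u x ≤ u xstar) := by
  have hint : ∀ x ∈ Set.Icc a b, ∀ y ∈ Set.Icc a b, IntervalIntegrable f MeasureTheory.volume x y := by
    intro x hx y hy
    exact (hf.mono (Set.uIcc_subset_Icc hx hy)).intervalIntegrable
  -- positivity of integrals
  have hpos : ∀ x ∈ Set.Icc a b, ∀ y ∈ Set.Icc a b, x < y → 0 < ∫ s in x..y, f s := by
    intro x hx y hy hxy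
    refine intervalIntegral.intervalIntegral_pos_of_pos_on (hint x hx y hy) ?_ hxy
    intro t ht
    exact hfpos t ⟨le_of_lt (lt_of_le_of_lt hx.1 ht.1), le_of_lt (lt_of_lt_of_le ht.2 hy.2)⟩
  -- splitting of integrals
  have hsplit : ∀ x ∈ Set.Icc a b, ∀ y ∈ Set.Icc a b,
      (∫ s in a..x, f s) + ∫ s in x..y, f s = ∫ s in a..y, f s := by
    intro x hx y hy
    exact intervalIntegral.integral_add_adjacent_intervals
      (hint a (Set.left_mem_Icc.2 hab.le) x hx) (hint x hx y hy)
  have hsplit' : ∀ x ∈ Set.Icc a b, ∀ y ∈ Set.Icc a b,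
      (∫ s in x..y, f s) + ∫ s in y..b, f s = ∫ s in x..b, f s := by
    intro x hx y hy
    exact intervalIntegral.integral_add_adjacent_intervals
      (hint x hx y hy) (hint y hy b (Set.right_mem_Icc.2 hab.le))
  -- differences of ua and ub
  have hua_diff : ∀ x ∈ Set.Icc a b, ∀ y ∈ Set.Icc a b, ua y - ua x = ∫ s in x..y, f s := by
    intro x hx y hy
    rw [hua, hua, ← hsplit x hx y hy]; ring
  have hub_diff : ∀ x ∈ Set.Icc a b, ∀ y ∈ Set.Icc a b, ub x - ub y = ∫ s in x..y, f s := by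
    intro x hx y hy
    rw [hub, hub, ← hsplit' x hx y hy]; ring
  set h : ℝ → ℝ := fun x => ua x - ub x with hh
  have hmono : StrictMonoOn h (Set.Icc a b) := by
    intro x hx y hy hxy
    have h1 := hua_diff x hx y hy
    have h2 := hub_diff x hx y hy
    have h3 := hpos x hx y hy hxy
    simp only [hh]; nlinarith
  -- continuity of h on Icc a b
  have hFcont : ContinuousOn (fun x => ∫ s in a..x, f s) (Set.Icc a b) := by
    have := intervalIntegral.continuousOn_primitive_interval'
      (hint a (Set.left_mem_Icc.2 hab.le) b (Set.right_mem_Icc.2 hab.le))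
      (Set.left_mem_uIcc)
    rwa [Set.uIcc_of_le hab.le] at this
  have hcont : ContinuousOn h (Set.Icc a b) := by
    have : ∀ x ∈ Set.Icc a b,
        h x = (g a - g b - ∫ s in a..b, f s) + 2 * ∫ s in a..x, f s := by
      intro x hx
      have h2 := hub_diff x hx b (Set.right_mem_Icc.2 hab.le)
      have h3 : ub b = g b := by
        rw [hub]; simp
      have h4 : ua x = g a + ∫ s in a..x, f s := hua x
      have h5 := hua_diff x hx b (Set.right_mem_Icc.2 hab.le)
      have h6 : ua b = g a + ∫ s in a..b, f s := hua b
      simp only [hh]; nlinarith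
    refine ContinuousOn.congr ?_ this
    exact continuousOn_const.add (continuousOn_const.mul hFcont)
  -- endpoints
  have ha_mem : a ∈ Set.Icc a b := Set.left_mem_Icc.2 hab.le
  have hb_mem : b ∈ Set.Icc a b := Set.right_mem_Icc.2 hab.le
  have huaa : ua a = g a := by rw [hua]; simp
  have hubb : ub b = g b := by rw [hub]; simp
  have hha : h a < 0 := by simp only [hh]; rw [huaa]; linarith
  have hhb : 0 < h b := by simp only [hh]; rw [hubb]; linarith
  obtain ⟨xstar, hxmem, hx0⟩ := intermediate_value_Ioo hab.le hcont ⟨hha, hhb⟩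
  have hxIcc : xstar ∈ Set.Icc a b := ⟨hxmem.1.le, hxmem.2.le⟩
  have hx0' : ua xstar - ub xstar = 0 := hx0
  have heq : ua xstar = ub xstar := by linarith
  refine ⟨xstar, hxmem, heq, ?_, ?_, ?_, ?_⟩
  · intro y hy hy'
    have hyIcc : y ∈ Set.Icc a b := ⟨hy.1.le, hy.2.le⟩
    apply hmono.injOn hyIcc hxIcc
    simp only [hh]; rw [hy']; linarith
  · intro x hx
    have hxab : x ∈ Set.Icc a b := ⟨hx.1, hx.2.trans hxmem.2.le⟩
    have : h x ≤ h xstar := (hmono.monotoneOn) hxab hxIcc hx.2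
    rw [hu]
    exact min_eq_left (by simp only [hh] at this; linarith)
  · intro x hx
    have hxab : x ∈ Set.Icc a b := ⟨hxmem.1.le.trans hx.1, hx.2⟩
    have : h xstar ≤ h x := (hmono.monotoneOn) hxIcc hxab hx.1
    rw [hu]
    exact min_eq_right (by simp only [hh] at this; linarith)
  · intro x hx
    have hnonneg : ∀ p ∈ Set.Icc a b, ∀ q ∈ Set.Icc a b, p ≤ q → 0 ≤ ∫ s in p..q, f s := by
      intro p hp q hq hpq
      rcases eq_or_lt_of_le hpq with rfl | hlt
      · simp
      · exact (hpos p hp q hq hlt).le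
    have hux : u xstar = ua xstar := by rw [hu]; rw [heq]; simp
    rcases le_total x xstar with hle | hle
    · have hxab := hx
      have h1 := hua_diff x hxab xstar hxIcc
      have h2 := hnonneg x hxab xstar hxIcc hle
      have : u x ≤ ua x := by rw [hu]; exact min_le_left _ _
      rw [hux]; linarith
    · have h1 := hub_diff xstar hxIcc x hx
      have h2 := hnonneg xstar hxIcc x hx hle
      have : u x ≤ ub x := by rw [hu]; exact min_le_right _ _
      rw [hux, heq]; linarith
end
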